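/- Let G = (L, Σ, δ, O) be a POMDP, T ⊆ L, and l ∈ L. If there exists an observation-based strategy that is positive winning for Safe(T) from l, then there exists a pure observation-based finite-memory strategy with memory of size at most (|L| + 1) · 2^{|L|} that is positive winning for Safe(T) from l. -/

import Mathlib

open scoped ENNReal

/-- A partially-observable Markov decision process (POMDP) with states `L`,
actions `A` and observations `O`: a probabilistic transition function and an
observation function (the observations partition the state space). -/
structure POMDP (L : Type) (A : Type) (O : Type) where
  δ : L → A → PMF L
  obs : L → O

namespace POMDP

variable {L A O : Type}

/-- A (randomized) strategy: given the initial state and the history of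
(action, state) steps played so far, it chooses a distribution on actions. -/
abbrev Strategy (L A : Type) := L → List (A × L) → PMF A

/-- The sequence of states visited along a finite prefix. -/
def statesOf (l : L) (h : List (A × L)) : List L := l :: h.map Prod.snd

/-- Auxiliary probability of a finite prefix, for a strategy `π` given as a
function of the remaining history. -/
noncomputable def prefProbAux (M : POMDP L A O) :
    (List (A × L) → PMF A) → L → List (A × L) → ℝ≥0∞
  | _, _, [] => 1
  | π, l, (a, l') :: h =>
      π [] a * M.δ l a l' * M.prefProbAux (fun h' => π ((a, l') :: h')) l' h

/-- The probability, under strategy `α` from state `l`, that the play starts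
with the finite prefix `h` of (action, state) steps. -/
noncomputable def prefProb (M : POMDP L A O) (α : Strategy L A) (l : L)
    (h : List (A × L)) : ℝ≥0∞ :=
  M.prefProbAux (α l) l h

/-- A prefix is consistent with `α` from `l` if it has positive probability. -/
def Consistent (M : POMDP L A O) (α : Strategy L A) (l : L) (h : List (A × L)) : Prop :=
  0 < M.prefProb α l h

/-- The probability, under strategy `α` from state `l`, that the length-`n`
prefix of the play satisfies the predicate `P`. -/
noncomputable def horizonProb (M : POMDP L A O) [Fintype L] [Fintype A]
    (α : Strategy L A) (l : L) (n : ℕ) (P : List (A × L) → Prop) : ℝ≥0∞ :=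
  ∑ f : Fin n → A × L,
    Set.indicator {g : Fin n → A × L | P (List.ofFn g)}
      (fun g => M.prefProb α l (List.ofFn g)) f

/-- `Pr_l^α(Reach(T))`: probability that the play visits a state of `T`
(as the increasing limit of the finite-horizon reachability probabilities). -/
noncomputable def reachProb (M : POMDP L A O) [Fintype L] [Fintype A]
    (α : Strategy L A) (l : L) (T : Set L) : ℝ≥0∞ :=
  ⨆ n, M.horizonProb α l n (fun h => ∃ s ∈ statesOf l h, s ∈ T)

/-- `Pr_l^α(Safe(T))`: probability that all states of the play lie in `T`
(as the decreasing limit of the finite-horizon safety probabilities). -/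
noncomputable def safeProb (M : POMDP L A O) [Fintype L] [Fintype A]
    (α : Strategy L A) (l : L) (T : Set L) : ℝ≥0∞ :=
  ⨅ n, M.horizonProb α l n (fun h => ∀ s ∈ statesOf l h, s ∈ T)

/-- `Pr_l^α(Until(T₁,T₂))`: probability that the play visits `T₂` at some
position `k` with all positions `≤ k` in `T₁`. -/
noncomputable def untilProb (M : POMDP L A O) [Fintype L] [Fintype A]
    (α : Strategy L A) (l : L) (T₁ T₂ : Set L) : ℝ≥0∞ :=
  ⨆ n, M.horizonProb α l n (fun h => ∃ k, ∃ hk : k < (statesOf l h).length,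
      (statesOf l h).get ⟨k, hk⟩ ∈ T₂ ∧
      ∀ j, ∀ hj : j < (statesOf l h).length, j ≤ k → (statesOf l h).get ⟨j, hj⟩ ∈ T₁)

/-- `Pr_l^α(coBüchi(T))`: probability that from some point on all states of
the play lie in `T`. -/
noncomputable def coBuchiProb (M : POMDP L A O) [Fintype L] [Fintype A]
    (α : Strategy L A) (l : L) (T : Set L) : ℝ≥0∞ :=
  ⨆ k, ⨅ n, M.horizonProb α l n (fun h =>
    ∀ j, ∀ hj : j < (statesOf l h).length, k ≤ j → (statesOf l h).get ⟨j, hj⟩ ∈ T)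

/-- `Pr_l^α(Büchi(T))`: probability that the play visits `T` infinitely often. -/
noncomputable def buchiProb (M : POMDP L A O) [Fintype L] [Fintype A]
    (α : Strategy L A) (l : L) (T : Set L) : ℝ≥0∞ :=
  ⨅ k, ⨆ n, M.horizonProb α l n (fun h =>
    ∃ j, ∃ hj : j < (statesOf l h).length, k ≤ j ∧ (statesOf l h).get ⟨j, hj⟩ ∈ T)

/-- A strategy is observation-based if it plays the same distribution after any
two prefixes with the same sequences of observations and of actions. -/
def ObservationBased (M : POMDP L A O) (α : Strategy L A) : Prop :=
  ∀ l l' (h h' : List (A × L)), M.obs l = M.obs l' →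
    h.map Prod.fst = h'.map Prod.fst →
    h.map (fun p => M.obs p.2) = h'.map (fun p => M.obs p.2) →
    α l h = α l' h'

/-- A strategy is pure if it always plays a Dirac distribution. -/
def PureStrategy (α : Strategy L A) : Prop := ∀ l h, ∃ a, α l h = PMF.pure a

/-- Edge of the underlying graph of the POMDP. -/
def Edge (M : POMDP L A O) (l l' : L) : Prop := ∃ a, 0 < M.δ l a l'

/-- Reachability in the underlying graph of the POMDP. -/
def ReachableFrom (M : POMDP L A O) (l l' : L) : Prop :=
  Relation.ReflTransGen M.Edge l l'

/-- The memory state reached by a memory-update function `u` (together with the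
current state) after running through a prefix. -/
def memRun (M : POMDP L A O) {Mem : Type} (u : Mem → O → A → Mem) :
    Mem → L → List (A × L) → Mem × L
  | m, l, [] => (m, l)
  | m, l, (a, l') :: h => M.memRun u (u m (M.obs l) a) l' h

/-- The (observation-based) strategy induced by a finite-memory machine given by
memory-update function `u`, next-action function `next` and initial memory `m0`. -/
def fmStrategy (M : POMDP L A O) {Mem : Type} (u : Mem → O → A → Mem)
    (next : Mem → O → PMF A) (m0 : Mem) : Strategy L A :=
  fun l h =>
    let p := M.memRun u m0 l h
    next p.1 (M.obs p.2)

/-- The distribution choosing `x` and `y` with probability 1/2 each. -/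
noncomputable def half (x y : L) : PMF L :=
  (PMF.uniformOfFintype Bool).map (fun b => if b then x else y)

end POMDP

/-!
Winning belief supports for almost-sure safety form the greatest fixed point of a monotone
operator on `Set (Set L)`; as this lattice is finite, some `R`-th Kleene approximation already
excludes every losing belief. From a belief outside the `k`-th approximation, any
observation-based strategy leaves `T` within `k` steps with probability at least `(c / |A|) ^ k`,
`c` being the least positive transition probability. So if no state whose singleton belief is
winning were reachable from `l` inside `T`, the safety probability would be at most
`(1 - (c / |A|) ^ R) ^ k` for every `k`, hence zero.

The finite-memory strategy, with memory `L ⊕ Set L`, first follows a positive-probability path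
to such a state, remembering the state it presumes to be in, and then plays the belief-support
strategy that stays among winning beliefs, which is safe almost surely.
-/

open Finset

lemma PMF.sum_coe_eq_one {α : Type*} [Fintype α] (p : PMF α) : ∑ a, p a = 1 := by
  rw [← tsum_fintype (L := SummationFilter.unconditional α), p.tsum_coe]

lemma PMF.exists_inv_card_le {α : Type*} [Fintype α] (p : PMF α) :
    ∃ a, (Fintype.card α : ℝ≥0∞)⁻¹ ≤ p a := by
  obtain ⟨a₀, -⟩ := p.support_nonempty
  have : Nonempty α := ⟨a₀⟩
  have hsum : ∑ _a : α, (Fintype.card α : ℝ≥0∞)⁻¹ ≤ ∑ a, p a := by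
    rw [sum_const, card_univ, nsmul_eq_mul, ENNReal.mul_inv_cancel (by simp) (by simp),
      p.sum_coe_eq_one]
  simpa using ENNReal.exists_le_of_sum_le ⟨a₀, mem_univ _⟩ hsum

lemma OrderHom.exists_iterate_top_le_gfp {α : Type*} [CompleteLattice α] [Finite α]
    (f : α →o α) : ∃ n, f^[n] ⊤ ≤ f.gfp := by
  have hanti : Antitone fun n => f^[n] ⊤ := f.monotone.antitone_iterate_of_map_le le_top
  obtain ⟨i, j, hij, heq⟩ := Finite.exists_ne_map_eq_of_infinite fun n => f^[n] ⊤
  wlog hlt : i < j generalizing i j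
  · exact this j i hij.symm heq.symm (hij.lt_or_gt.resolve_left hlt)
  refine ⟨i, f.le_gfp ?_⟩
  rw [← Function.iterate_succ_apply' f i]
  exact heq.le.trans (hanti hlt)

lemma ENNReal.sum_mul_add_mul_le_one {ι : Type*} [Fintype ι] {w V : ι → ℝ≥0∞}
    (hw : ∑ i, w i = 1) (hV : ∀ i, V i ≤ 1) {i₀ : ι} {e r : ℝ≥0∞} (he : e ≤ w i₀)
    (hV₀ : V i₀ + r ≤ 1) : ∑ i, w i * V i + e * r ≤ 1 := by
  classical
  have hrest : ∑ i ∈ univ.erase i₀, w i * V i ≤ ∑ i ∈ univ.erase i₀, w i :=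
    sum_le_sum fun i _ => mul_le_of_le_one_right' (hV i)
  have hhead : w i₀ * V i₀ + e * r ≤ w i₀ :=
    calc w i₀ * V i₀ + e * r ≤ w i₀ * (V i₀ + r) := by rw [mul_add]; gcongr
      _ ≤ w i₀ := mul_le_of_le_one_right' hV₀
  calc ∑ i, w i * V i + e * r
      = (w i₀ * V i₀ + e * r) + ∑ i ∈ univ.erase i₀, w i * V i := by
        rw [← add_sum_erase _ _ (mem_univ i₀)]; ring
    _ ≤ w i₀ + ∑ i ∈ univ.erase i₀, w i := add_le_add hhead hrest
    _ = 1 := by rw [add_sum_erase _ _ (mem_univ i₀), hw]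

namespace POMDP

open Classical

variable {L A O : Type} (M : POMDP L A O) (T : Set L)

/-- `safeExp T F n σ t` is the expectation of `F` (evaluated at the continuation strategy and
the state reached) after `n` steps of `σ` from `t`, over the plays that stayed in `T`; it is
`0` on the other plays. -/
noncomputable def safeExp [Fintype L] [Fintype A]
    (F : (List (A × L) → PMF A) → L → ℝ≥0∞) :
    ℕ → (List (A × L) → PMF A) → L → ℝ≥0∞
  | 0, σ, t => if t ∈ T then F σ t else 0
  | n + 1, σ, t => if t ∈ T then
      ∑ p : A × L, σ [] p.1 * M.δ t p.1 p.2 * safeExp F n (fun h => σ (p :: h)) p.2 else 0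

def StepClosed (J : (List (A × L) → PMF A) → L → Prop) : Prop :=
  ∀ σ t (p : A × L), J σ t → t ∈ T → σ [] p.1 * M.δ t p.1 p.2 ≠ 0 →
    J (fun h => σ (p :: h)) p.2

def ObservationBasedFrom (σ : List (A × L) → PMF A) : Prop :=
  ∀ h h' : List (A × L), h.map Prod.fst = h'.map Prod.fst →
    h.map (fun p => M.obs p.2) = h'.map (fun p => M.obs p.2) → σ h = σ h'

def post (B : Set L) (a : A) : Set L := {t | ∃ s ∈ B, M.δ s a t ≠ 0}

def cell (B : Set L) (o : O) : Set L := {s ∈ B | M.obs s = o}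

def safeBeliefStep : Set (Set L) →o Set (Set L) where
  toFun X := {B | B ⊆ T ∧ ∃ a, ∀ t ∈ M.post B a, M.cell (M.post B a) (M.obs t) ∈ X}
  monotone' _ _ hXY _ := fun ⟨hBT, a, ha⟩ => ⟨hBT, a, fun t ht => hXY (ha t ht)⟩

/-- The belief supports from which `Safe(T)` can be won almost surely. -/
def winningBeliefs : Set (Set L) := (M.safeBeliefStep T).gfp

def reachWinning : ℕ → Set L
  | 0 => {t | {t} ∈ M.winningBeliefs T}
  | n + 1 => reachWinning n ∪
      {t | t ∈ T ∧ ∃ p : A × L, M.δ t p.1 p.2 ≠ 0 ∧ p.2 ∈ reachWinning n}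

def StepsTowardWinning (step : L → A × L) : Prop :=
  ∀ n t, t ∈ M.reachWinning T (n + 1) → t ∉ M.reachWinning T 0 →
    t ∈ T ∧ M.δ t (step t).1 (step t).2 ≠ 0 ∧ (step t).2 ∈ M.reachWinning T n

variable {M T}

section SafeExp

variable [Fintype L] [Fintype A]

lemma sum_weights_eq_one (π : PMF A) (t : L) : ∑ p : A × L, π p.1 * M.δ t p.1 p.2 = 1 := by
  simp_rw [Fintype.sum_prod_type, ← mul_sum, PMF.sum_coe_eq_one, mul_one]
  exact π.sum_coe_eq_one

lemma safeExp_of_not_mem {F} {t : L} (ht : t ∉ T) (n : ℕ) (σ : List (A × L) → PMF A) :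
    M.safeExp T F n σ t = 0 := by
  cases n <;> simp [safeExp, ht]

lemma safeExp_add (F) (n m : ℕ) (σ : List (A × L) → PMF A) (t : L) :
    M.safeExp T F (n + m) σ t = M.safeExp T (M.safeExp T F m) n σ t := by
  induction n generalizing σ t with
  | zero => by_cases ht : t ∈ T <;> simp [safeExp, ht, safeExp_of_not_mem]
  | succ n ih => simp only [Nat.succ_add, safeExp, ih]

lemma safeExp_const_mul (c : ℝ≥0∞) (F) (n : ℕ) (σ : List (A × L) → PMF A) (t : L) :
    M.safeExp T (fun σ t => c * F σ t) n σ t = c * M.safeExp T F n σ t := by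
  induction n generalizing σ t with
  | zero => simp [safeExp, apply_ite (c * ·)]
  | succ n ih =>
    simp only [safeExp, ih, mul_sum, apply_ite (c * ·), mul_zero, mul_left_comm c]

lemma safeExp_one_le_one (n : ℕ) (σ : List (A × L) → PMF A) (t : L) :
    M.safeExp T 1 n σ t ≤ 1 := by
  induction n generalizing σ t with
  | zero => simp only [safeExp]; split_ifs <;> simp
  | succ n ih =>
    simp only [safeExp]
    split_ifs
    · calc _ ≤ ∑ p : A × L, σ [] p.1 * M.δ t p.1 p.2 :=
            sum_le_sum fun p _ => mul_le_of_le_one_right' (ih _ _)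
        _ = 1 := sum_weights_eq_one _ _
    · exact zero_le_one

lemma sum_indicator_prefProbAux_eq_safeExp (n : ℕ) (σ : List (A × L) → PMF A) (t : L) :
    ∑ f : Fin n → A × L, Set.indicator {g | ∀ s ∈ statesOf t (List.ofFn g), s ∈ T}
      (fun g => M.prefProbAux σ t (List.ofFn g)) f = M.safeExp T 1 n σ t := by
  induction n generalizing σ t with
  | zero => by_cases ht : t ∈ T <;> simp [safeExp, statesOf, prefProbAux, ht, Set.indicator]
  | succ n ih =>
    rw [← (Fin.consEquiv fun _ => A × L).sum_comp, Fintype.sum_prod_type, safeExp]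
    split_ifs with ht
    · refine sum_congr rfl fun p _ => ?_
      rw [← ih, mul_sum]
      refine sum_congr rfl fun g _ => ?_
      simp [Fin.consEquiv, Set.indicator, statesOf, prefProbAux, ht]
    · refine sum_eq_zero fun p _ => sum_eq_zero fun g _ => ?_
      simp [Fin.consEquiv, Set.indicator, statesOf, ht]

lemma safeProb_eq_iInf_safeExp (α : Strategy L A) (l : L) :
    M.safeProb α l T = ⨅ n, M.safeExp T 1 n (α l) l := by
  simp only [safeProb, horizonProb, prefProb, sum_indicator_prefProbAux_eq_safeExp]

variable {J : (List (A × L) → PMF A) → L → Prop}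

lemma safeExp_mono_of_stepClosed (hJ : M.StepClosed T J) {F G}
    (hFG : ∀ σ t, J σ t → F σ t ≤ G σ t) (n : ℕ) {σ t} (h : J σ t) :
    M.safeExp T F n σ t ≤ M.safeExp T G n σ t := by
  induction n generalizing σ t with
  | zero => simp only [safeExp]; split_ifs; exacts [hFG σ t h, le_rfl]
  | succ n ih =>
    simp only [safeExp]
    split_ifs with ht
    · refine sum_le_sum fun p _ => ?_
      by_cases hw : σ [] p.1 * M.δ t p.1 p.2 = 0
      · simp [hw]
      · gcongr
        exact ih (hJ σ t p h ht hw)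
    · exact le_rfl

lemma safeExp_one_eq_one_of_stepClosed (hJ : M.StepClosed T J) (hT : ∀ σ t, J σ t → t ∈ T)
    (n : ℕ) {σ t} (h : J σ t) : M.safeExp T 1 n σ t = 1 := by
  induction n generalizing σ t with
  | zero => simp [safeExp, hT σ t h]
  | succ n ih =>
    rw [safeExp, if_pos (hT σ t h), ← sum_weights_eq_one (σ []) t]
    refine sum_congr rfl fun p _ => ?_
    by_cases hw : σ [] p.1 * M.δ t p.1 p.2 = 0
    · rw [hw, zero_mul]
    · rw [ih (hJ σ t p h (hT σ t h) hw), mul_one]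

lemma safeExp_mul_le_pow_of_stepClosed (hJ : M.StepClosed T J) {R : ℕ} {q : ℝ≥0∞}
    (hq : ∀ σ t, J σ t → M.safeExp T 1 R σ t ≤ q) (k : ℕ) {σ t} (h : J σ t) :
    M.safeExp T 1 (k * R) σ t ≤ q ^ k := by
  induction k generalizing σ t with
  | zero => simpa using safeExp_one_le_one 0 σ t
  | succ k ih =>
    calc M.safeExp T 1 ((k + 1) * R) σ t = M.safeExp T (M.safeExp T 1 (k * R)) R σ t := by
          rw [← safeExp_add, add_one_mul, add_comm]
      _ ≤ M.safeExp T (fun _ _ => q ^ k * 1) R σ t :=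
          safeExp_mono_of_stepClosed hJ (fun σ t h => by simpa using ih h) R h
      _ = q ^ k * M.safeExp T 1 R σ t := safeExp_const_mul _ 1 R σ t
      _ ≤ q ^ k * q := by gcongr; exact hq σ t h
      _ = q ^ (k + 1) := (pow_succ q k).symm

end SafeExp

lemma ObservationBased.observationBasedFrom {α : Strategy L A} (hα : M.ObservationBased α)
    (l : L) : M.ObservationBasedFrom (α l) :=
  fun h h' => hα l l h h' rfl

lemma ObservationBasedFrom.shift {σ : List (A × L) → PMF A} (hσ : M.ObservationBasedFrom σ)
    (p : A × L) : M.ObservationBasedFrom fun h => σ (p :: h) :=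
  fun h h' hA hO => hσ _ _ (by simp [hA]) (by simp [hO])

lemma memRun_congr {Mem : Type} (u : Mem → O → A → Mem) :
    ∀ (m : Mem) (h h' : List (A × L)) (t t' : L), M.obs t = M.obs t' →
      h.map Prod.fst = h'.map Prod.fst →
      h.map (fun p => M.obs p.2) = h'.map (fun p => M.obs p.2) →
      (M.memRun u m t h).1 = (M.memRun u m t' h').1 ∧
        M.obs (M.memRun u m t h).2 = M.obs (M.memRun u m t' h').2
  | _, [], [], _, _, hobs, _, _ => ⟨rfl, hobs⟩
  | m, (a, s) :: h, (a', s') :: h', t, t', hobs, hA, hO => by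
    simp only [List.map_cons, List.cons.injEq] at hA hO
    simp only [memRun, hobs, hA.1]
    exact memRun_congr u _ h h' s s' hO.1 hA.2 hO.2

lemma fmStrategy_observationBased {Mem : Type} (u : Mem → O → A → Mem)
    (next : Mem → O → PMF A) (m₀ : Mem) : M.ObservationBased (M.fmStrategy u next m₀) := by
  intro t t' h h' hobs hA hO
  obtain ⟨hm, ho⟩ := M.memRun_congr u m₀ h h' t t' hobs hA hO
  simp only [fmStrategy, hm, ho]

lemma mem_winningBeliefs_iff {B : Set L} : B ∈ M.winningBeliefs T ↔
    B ⊆ T ∧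
      ∃ a, ∀ t ∈ M.post B a, M.cell (M.post B a) (M.obs t) ∈ M.winningBeliefs T := by
  conv_lhs => rw [winningBeliefs, ← OrderHom.map_gfp]
  rfl

lemma subset_of_mem_winningBeliefs {B : Set L} (hB : B ∈ M.winningBeliefs T) : B ⊆ T :=
  (mem_winningBeliefs_iff.1 hB).1

lemma reachWinning_mono : Monotone (M.reachWinning T) :=
  monotone_nat_of_le_succ fun _ => Set.subset_union_left

lemma exists_pos_le_transition [Fintype L] [Fintype A] :
    ∃ c : ℝ≥0∞, 0 < c ∧ c ≤ 1 ∧ ∀ s a t, M.δ s a t ≠ 0 → c ≤ M.δ s a t := by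
  let S := univ.filter fun x : L × A × L => M.δ x.1 x.2.1 x.2.2 ≠ 0
  refine ⟨S.inf (fun x => M.δ x.1 x.2.1 x.2.2) ⊓ 1, lt_inf_iff.2 ⟨?_, one_pos⟩,
    inf_le_right,
    fun s a t h => inf_le_left.trans (Finset.inf_le (b := (s, a, t)) (by simp [S, h]))⟩
  exact (Finset.lt_inf_iff ENNReal.zero_lt_top).2 fun x hx =>
    pos_iff_ne_zero.2 (by simpa [S] using hx)

section Losing

variable [Fintype L] [Fintype A]

/-- `σ` plays some action `a₀` with probability at least `1 / |A|`; since `B` fails the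
`(k + 1)`-th approximation, `a₀` leads from some state of `B` out of `T` or to a belief failing
the `k`-th one. -/
lemma exists_safeExp_add_pow_le_one {c : ℝ≥0∞} (hc : c ≤ 1)
    (hcδ : ∀ s a t, M.δ s a t ≠ 0 → c ≤ M.δ s a t) (k : ℕ) {B : Set L}
    (hB : B ∉ (M.safeBeliefStep T)^[k] ⊤) {σ : List (A × L) → PMF A}
    (hσ : M.ObservationBasedFrom σ) :
    ∃ s ∈ B, M.safeExp T 1 k σ s + ((Fintype.card A : ℝ≥0∞)⁻¹ * c) ^ k ≤ 1 := by
  induction k generalizing B σ with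
  | zero => exact absurd trivial hB
  | succ k ih =>
    rw [Function.iterate_succ_apply'] at hB
    obtain ⟨a₀, ha₀⟩ := (σ []).exists_inv_card_le
    by_cases hBT : B ⊆ T
    · obtain ⟨t', ht', hcell⟩ : ∃ t ∈ M.post B a₀,
          M.cell (M.post B a₀) (M.obs t) ∉ (M.safeBeliefStep T)^[k] ⊤ := by
        by_contra! h
        exact hB ⟨hBT, a₀, h⟩
      obtain ⟨s', ⟨⟨s, hsB, hδ⟩, hs'obs⟩, hs'⟩ := ih hcell (hσ.shift (a₀, t'))
      have hshift : (fun h => σ ((a₀, s') :: h)) = fun h => σ ((a₀, t') :: h) :=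
        funext fun h => hσ _ _ (by simp) (by simp [hs'obs])
      refine ⟨s, hsB, ?_⟩
      rw [safeExp, if_pos (hBT hsB), pow_succ']
      refine ENNReal.sum_mul_add_mul_le_one (sum_weights_eq_one _ _)
        (fun p => safeExp_one_le_one _ _ _) (i₀ := (a₀, s'))
        (mul_le_mul' ha₀ (hcδ _ _ _ hδ)) ?_
      simpa [hshift] using hs'
    · obtain ⟨s, hsB, hsT⟩ := Set.not_subset.1 hBT
      refine ⟨s, hsB, ?_⟩
      rw [safeExp_of_not_mem hsT, zero_add]
      exact pow_le_one₀ zero_le ((mul_le_mul' ha₀ hc).trans (by simpa using PMF.coe_le_one _ _))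

lemma exists_reachWinning_of_safeProb_pos [Nonempty A] {α : Strategy L A} {l : L}
    (hα : M.ObservationBased α) (hpos : 0 < M.safeProb α l T) :
    ∃ n, l ∈ M.reachWinning T n := by
  by_contra! hl
  obtain ⟨R, hR⟩ := (M.safeBeliefStep T).exists_iterate_top_le_gfp
  obtain ⟨c, hc0, hc1, hcδ⟩ := M.exists_pos_le_transition
  set d := (Fintype.card A : ℝ≥0∞)⁻¹ * c
  have hd : d ≠ 0 := mul_ne_zero (by simp) hc0.ne'
  have hdR : d ^ R ≠ ⊤ :=
    ENNReal.pow_ne_top (ENNReal.mul_ne_top (by simp) (ne_top_of_le_ne_top ENNReal.one_ne_top hc1))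
  let J σ t := M.ObservationBasedFrom σ ∧ ∀ n, t ∉ M.reachWinning T n
  have hJ : M.StepClosed T J := fun σ t p ⟨hσ, ht⟩ htT hw =>
    ⟨hσ.shift p, fun n hn => ht (n + 1) (Or.inr ⟨htT, p, right_ne_zero_of_mul hw, hn⟩)⟩
  have hround : ∀ σ t, J σ t → M.safeExp T 1 R σ t ≤ 1 - d ^ R := by
    rintro σ t ⟨hσ, ht⟩
    by_cases htT : t ∈ T
    · obtain ⟨s, rfl, hs⟩ :=
        exists_safeExp_add_pow_le_one hc1 hcδ R (fun h => ht 0 (hR h)) hσ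
      exact ENNReal.le_sub_of_add_le_right hdR hs
    · rw [safeExp_of_not_mem htT]
      exact zero_le
  have hq : 1 - d ^ R < 1 :=
    ENNReal.sub_lt_self ENNReal.one_ne_top one_ne_zero (pow_ne_zero _ hd)
  have hbound : ∀ k, M.safeProb α l T ≤ (1 - d ^ R) ^ k := fun k => by
    rw [safeProb_eq_iInf_safeExp]
    exact (iInf_le _ (k * R)).trans
      (safeExp_mul_le_pow_of_stepClosed hJ hround k ⟨hα.observationBasedFrom l, hl⟩)
  exact hpos.ne' (le_antisymm
    (ge_of_tendsto' (ENNReal.tendsto_pow_atTop_nhds_zero_of_lt_one hq) hbound) zero_le)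

end Losing

section Machine

variable (M T) [Nonempty A]

noncomputable def beliefAction (B : Set L) : A :=
  if h : ∃ a, ∀ t ∈ M.post B a, M.cell (M.post B a) (M.obs t) ∈ M.winningBeliefs T then
    h.choose
  else Classical.arbitrary A

noncomputable def enter (t : L) : L ⊕ Set L :=
  if {t} ∈ M.winningBeliefs T then .inr {t} else .inl t

/-- Memory `inl t`: the play is presumed to be at `t` and follows `step`. Memory `inr B`: `B` is
the belief support before the current observation. -/
noncomputable def update (step : L → A × L) : L ⊕ Set L → O → A → L ⊕ Set L
  | .inl t, _, _ => M.enter T (step t).2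
  | .inr B, o, a => .inr (M.post (M.cell B o) a)

noncomputable def action (step : L → A × L) : L ⊕ Set L → O → A
  | .inl t, _ => (step t).1
  | .inr B, o => M.beliefAction T (M.cell B o)

noncomputable abbrev machine (step : L → A × L) : L ⊕ Set L → Strategy L A :=
  M.fmStrategy (M.update T step) (fun m o => PMF.pure (M.action T step m o))

variable {M T}

lemma beliefAction_spec {B : Set L} (hB : B ∈ M.winningBeliefs T) :
    ∀ t ∈ M.post B (M.beliefAction T B),
      M.cell (M.post B (M.beliefAction T B)) (M.obs t) ∈ M.winningBeliefs T := by
  have h := (mem_winningBeliefs_iff.1 hB).2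
  rw [beliefAction, dif_pos h]
  exact h.choose_spec

lemma exists_stepsTowardWinning : ∃ step : L → A × L, M.StepsTowardWinning T step := by
  suffices ∀ t, ∃ p : A × L, ∀ n,
      t ∈ M.reachWinning T (n + 1) → t ∉ M.reachWinning T 0 →
      t ∈ T ∧ M.δ t p.1 p.2 ≠ 0 ∧ p.2 ∈ M.reachWinning T n by
    choose step hstep using this
    exact ⟨step, fun n t => hstep t n⟩
  intro t
  by_cases h : ∃ m, t ∈ M.reachWinning T (m + 1) ∧ t ∉ M.reachWinning T m
  · obtain ⟨m, htm, htm'⟩ := h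
    obtain ⟨htT, p, hδ, hp⟩ := htm.resolve_left htm'
    refine ⟨p, fun n hn _ => ⟨htT, hδ, reachWinning_mono ?_ hp⟩⟩
    by_contra! hnm
    exact htm' (reachWinning_mono hnm hn)
  · simp only [not_exists, not_and, not_not] at h
    have hdown : ∀ n, t ∈ M.reachWinning T n → t ∈ M.reachWinning T 0 := fun n => by
      induction n with
      | zero => exact id
      | succ n ih => exact fun hn => ih (h n hn)
    exact ⟨(Classical.arbitrary A, t), fun n hn ht0 => absurd (hdown _ hn) ht0⟩

variable [Fintype L] [Fintype A]

lemma safeExp_machine_inr_eq_one (step : L → A × L) (N : ℕ) {B : Set L} {t : L} (ht : t ∈ B)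
    (hB : M.cell B (M.obs t) ∈ M.winningBeliefs T) :
    M.safeExp T 1 N (M.machine T step (.inr B) t) t = 1 := by
  refine safeExp_one_eq_one_of_stepClosed
    (J := fun σ t => ∃ B, t ∈ B ∧ M.cell B (M.obs t) ∈ M.winningBeliefs T ∧
      σ = M.machine T step (.inr B) t) ?_ ?_ N ⟨B, ht, hB, rfl⟩
  · rintro σ t ⟨a, s⟩ ⟨B, htB, hB, rfl⟩ - hw
    obtain ⟨ha, hδ⟩ := mul_ne_zero_iff.1 hw
    obtain rfl : a = M.beliefAction T (M.cell B (M.obs t)) := by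
      by_contra hne
      exact ha (by simp [fmStrategy, memRun, action, hne])
    have hs : s ∈ M.post (M.cell B (M.obs t)) (M.beliefAction T (M.cell B (M.obs t))) :=
      ⟨t, ⟨htB, rfl⟩, hδ⟩
    exact ⟨_, hs, beliefAction_spec hB s hs, rfl⟩
  · rintro σ t ⟨B, htB, hB, -⟩
    exact subset_of_mem_winningBeliefs hB ⟨htB, rfl⟩

lemma safeExp_machine_enter_eq_one (step : L → A × L) {t : L} (ht : {t} ∈ M.winningBeliefs T)
    (N : ℕ) : M.safeExp T 1 N (M.machine T step (M.enter T t) t) t = 1 := by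
  have hcell : M.cell {t} (M.obs t) = {t} := by ext; simp +contextual [cell]
  rw [enter, if_pos ht]
  exact safeExp_machine_inr_eq_one step N rfl (by rwa [hcell])

lemma pow_le_safeExp_machine_enter {c : ℝ≥0∞} (hc : c ≤ 1)
    (hcδ : ∀ s a t, M.δ s a t ≠ 0 → c ≤ M.δ s a t) {step : L → A × L}
    (hstep : M.StepsTowardWinning T step)
    (n : ℕ) {t : L} (ht : t ∈ M.reachWinning T n) (N : ℕ) :
    c ^ n ≤ M.safeExp T 1 N (M.machine T step (M.enter T t) t) t := by
  induction n generalizing t N with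
  | zero => rw [safeExp_machine_enter_eq_one step ht, pow_zero]
  | succ n ih =>
    by_cases ht0 : t ∈ M.reachWinning T 0
    · rw [safeExp_machine_enter_eq_one step ht0]
      exact pow_le_one₀ zero_le hc
    obtain ⟨htT, hδ, hnext⟩ := hstep n t ht ht0
    have henter : M.enter T t = .inl t := by
      rw [enter]
      exact if_neg ht0
    rw [henter]
    cases N with
    | zero =>
      simp only [safeExp, if_pos htT, Pi.one_apply]
      exact pow_le_one₀ zero_le hc
    | succ N =>
      rw [safeExp, if_pos htT, pow_succ']
      refine le_trans ?_ (single_le_sum (fun _ _ => zero_le) (mem_univ (step t)))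
      have hpure : M.machine T step (.inl t) t [] (step t).1 = 1 := by
        simp [fmStrategy, memRun, action]
      rw [hpure, one_mul]
      exact mul_le_mul' (hcδ _ _ _ hδ) (ih hnext N)

end Machine

end POMDP

/-- If there is an observation-based strategy positive winning for
`Safe(T)` from `l`, then there is a pure observation-based finite-memory
strategy, with memory of size at most `(|L|+1) · 2^{|L|}`, that is positive
winning for `Safe(T)` from `l`. -/
theorem positive_safe_pure_exponential_memory {L A O : Type} [Fintype L] [Fintype A]
    (M : POMDP L A O) (T : Set L) (l : L)
    (h : ∃ α : POMDP.Strategy L A, M.ObservationBased α ∧ 0 < M.safeProb α l T) :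
    ∃ (Mem : Type) (iM : Fintype Mem) (m0 : Mem) (u : Mem → O → A → Mem)
      (next : Mem → O → A),
      @Fintype.card Mem iM ≤ (Fintype.card L + 1) * 2 ^ Fintype.card L ∧
      POMDP.PureStrategy (M.fmStrategy u (fun m o => PMF.pure (next m o)) m0) ∧
      M.ObservationBased (M.fmStrategy u (fun m o => PMF.pure (next m o)) m0) ∧
      0 < M.safeProb (M.fmStrategy u (fun m o => PMF.pure (next m o)) m0) l T := by
  obtain ⟨α, hα, hpos⟩ := h
  obtain ⟨a, -⟩ := (α l []).support_nonempty
  have : Nonempty A := ⟨a⟩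
  obtain ⟨n, hl⟩ := POMDP.exists_reachWinning_of_safeProb_pos hα hpos
  obtain ⟨step, hstep⟩ := POMDP.exists_stepsTowardWinning (M := M) (T := T)
  obtain ⟨c, hc0, hc1, hcδ⟩ := M.exists_pos_le_transition
  refine ⟨L ⊕ Set L, inferInstance, M.enter T l, M.update T step, M.action T step, ?_,
    fun _ _ => ⟨_, rfl⟩, M.fmStrategy_observationBased _ _ _, ?_⟩
  · rw [Fintype.card_sum, Fintype.card_set, add_one_mul]
    exact Nat.add_le_add_right (Nat.le_mul_of_pos_right _ (Nat.two_pow_pos _)) _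
  · rw [POMDP.safeProb_eq_iInf_safeExp]
    exact (pos_iff_ne_zero.2 (pow_ne_zero n hc0.ne')).trans_le
      (le_iInf fun N => POMDP.pow_le_safeExp_machine_enter hc1 hcδ hstep n hl N)
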